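/- Let H be a VE-space over a topologically ordered *-space Z, let T : H → H be a positive adjointable linear operator (i.e., [Th, h] ≥ 0 for all h), and let p be an increasing seminorm on Z. Then p([Th, h]) ≤ p([Th, Th])^{1/2} · p([h, h])^{1/2} for all h ∈ H. -/

import Mathlib

/-- An ordered *-space: a complex vector space with a conjugate-linear involution
and a strict cone of selfadjoint elements. The order is `x ≤ y ↔ y - x ∈ pos`. -/
structure OrderedStarSpace (Z : Type*) [AddCommGroup Z] [Module ℂ Z] where
  star : Z → Z
  star_add : ∀ x y : Z, star (x + y) = star x + star y
  star_smul : ∀ (c : ℂ) (x : Z), star (c • x) = (starRingEnd ℂ) c • star x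
  star_involutive : ∀ x : Z, star (star x) = x
  pos : Set Z
  pos_add : ∀ x ∈ pos, ∀ y ∈ pos, x + y ∈ pos
  pos_smul : ∀ (r : ℝ), 0 ≤ r → ∀ x ∈ pos, (r : ℂ) • x ∈ pos
  pos_strict : ∀ x ∈ pos, -x ∈ pos → x = 0
  pos_selfadjoint : ∀ x ∈ pos, star x = x

/-- A `Z`-valued gramian making `E` a VE-space over the ordered *-space `Z`. -/
structure VEGramian {Z : Type*} [AddCommGroup Z] [Module ℂ Z]
    (O : OrderedStarSpace Z) (E : Type*) [AddCommGroup E] [Module ℂ E] where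
  ip : E → E → Z
  add_right : ∀ x y z : E, ip x (y + z) = ip x y + ip x z
  smul_right : ∀ (c : ℂ) (x y : E), ip x (c • y) = c • ip x y
  herm : ∀ x y : E, ip x y = O.star (ip y x)
  ip_pos : ∀ x : E, ip x x ∈ O.pos
  definite : ∀ x : E, ip x x = 0 → x = 0

/-- An increasing seminorm on the ordered *-space `Z`. -/
structure IncSeminorm {Z : Type*} [AddCommGroup Z] [Module ℂ Z]
    (O : OrderedStarSpace Z) where
  p : Z → ℝ
  nonneg : ∀ x : Z, 0 ≤ p x
  add_le : ∀ x y : Z, p (x + y) ≤ p x + p y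
  smul : ∀ (c : ℂ) (x : Z), p (c • x) = ‖c‖ * p x
  mono : ∀ x y : Z, x ∈ O.pos → y - x ∈ O.pos → p x ≤ p y

/-!
Positivity of `[h - λ Th, h - λ Th]` and selfadjointness of `[Th, h]` give
`2λ [Th, h] ≤ [h, h] + λ² [Th, Th]` in the order of `Z` for every real `λ ≥ 0`. Applying the
increasing seminorm `p` turns this into the real inequality `2λ a ≤ b + λ² c`, and minimizing
over `λ` yields `a² ≤ b c`.
-/

theorem le_sqrt_mul_sqrt_of_forall_two_mul_le {a b c : ℝ} (hc : 0 ≤ c)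
    (h : ∀ l : ℝ, 0 ≤ l → 2 * l * a ≤ b + l ^ 2 * c) : a ≤ √c * √b := by
  rcases le_or_gt a 0 with ha | ha
  · exact ha.trans (by positivity)
  have hsq : a ^ 2 ≤ c * b := by
    have hb : 0 ≤ b := by simpa using h 0 le_rfl
    rcases hc.eq_or_lt with hc0 | hc0
    · have := h ((b + 1) / (2 * a)) (by positivity)
      rw [← hc0, show 2 * ((b + 1) / (2 * a)) * a = b + 1 by field_simp] at this
      linarith
    · have hdiv : a ^ 2 / c ≤ b :=
        calc a ^ 2 / c = 2 * (a / c) * a - (a / c) ^ 2 * c := by field_simp; ring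
          _ ≤ b := by linarith [h (a / c) (by positivity)]
      rw [div_le_iff₀ hc0] at hdiv
      linarith
  rw [← Real.sqrt_mul hc]
  exact (le_abs_self a).trans (Real.abs_le_sqrt hsq)

namespace VEGramian

variable {Z E : Type*} [AddCommGroup Z] [Module ℂ Z] [AddCommGroup E] [Module ℂ E]
  {O : OrderedStarSpace Z} (G : VEGramian O E)

theorem ip_add_left (x y z : E) : G.ip (x + y) z = G.ip x z + G.ip y z := by
  rw [G.herm (x + y) z, G.add_right, O.star_add, ← G.herm, ← G.herm]

theorem ip_smul_left (c : ℂ) (x y : E) : G.ip (c • x) y = (starRingEnd ℂ) c • G.ip x y := by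
  rw [G.herm (c • x) y, G.smul_right, O.star_smul, ← G.herm]

theorem ip_comm_of_mem_pos {x y : E} (hxy : G.ip x y ∈ O.pos) : G.ip y x = G.ip x y := by
  rw [G.herm y x, O.pos_selfadjoint _ hxy]

theorem ip_sub_ofReal_smul_self (x y : E) (l : ℝ) :
    G.ip (y - (l : ℂ) • x) (y - (l : ℂ) • x) =
      G.ip y y + ((l ^ 2 : ℝ) : ℂ) • G.ip x x - (l : ℂ) • (G.ip x y + G.ip y x) := by
  rw [sub_eq_add_neg, ← neg_smul, G.ip_add_left, G.add_right, G.add_right, G.ip_smul_left,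
    G.smul_right, G.smul_right, G.ip_smul_left, smul_smul]
  simp only [map_neg, Complex.conj_ofReal]
  push_cast
  module

end VEGramian

namespace IncSeminorm

variable {Z E : Type*} [AddCommGroup Z] [Module ℂ Z] [AddCommGroup E] [Module ℂ E]
  {O : OrderedStarSpace Z} (N : IncSeminorm O)

theorem p_ofReal_smul {r : ℝ} (hr : 0 ≤ r) (x : Z) : N.p ((r : ℂ) • x) = r * N.p x := by
  rw [N.smul, Complex.norm_real, Real.norm_of_nonneg hr]

theorem two_mul_le_of_ip_mem_pos (G : VEGramian O E) {x y : E} (hxy : G.ip x y ∈ O.pos)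
    {l : ℝ} (hl : 0 ≤ l) :
    2 * l * N.p (G.ip x y) ≤ N.p (G.ip y y) + l ^ 2 * N.p (G.ip x x) := by
  have hexpand : G.ip (y - (l : ℂ) • x) (y - (l : ℂ) • x) =
      G.ip y y + ((l ^ 2 : ℝ) : ℂ) • G.ip x x - ((2 * l : ℝ) : ℂ) • G.ip x y := by
    rw [G.ip_sub_ofReal_smul_self, G.ip_comm_of_mem_pos hxy]
    push_cast
    module
  have hcross : ((2 * l : ℝ) : ℂ) • G.ip x y ∈ O.pos := O.pos_smul _ (by positivity) _ hxy
  have hdiff := G.ip_pos (y - (l : ℂ) • x)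
  rw [hexpand] at hdiff
  calc 2 * l * N.p (G.ip x y) = N.p (((2 * l : ℝ) : ℂ) • G.ip x y) :=
        (N.p_ofReal_smul (by positivity) _).symm
    _ ≤ N.p (G.ip y y + ((l ^ 2 : ℝ) : ℂ) • G.ip x x) := N.mono _ _ hcross hdiff
    _ ≤ N.p (G.ip y y) + l ^ 2 * N.p (G.ip x x) := by
        rw [← N.p_ofReal_smul (by positivity)]
        exact N.add_le _ _

end IncSeminorm

theorem schwarz_for_positive_operator_general {Z E : Type*} [AddCommGroup Z] [Module ℂ Z]
    [AddCommGroup E] [Module ℂ E]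
    (O : OrderedStarSpace Z) (N : IncSeminorm O) (G : VEGramian O E)
    (T : Module.End ℂ E)
    (hTpos : ∀ h : E, G.ip (T h) h ∈ O.pos) :
    ∀ h : E, N.p (G.ip (T h) h) ≤
      Real.sqrt (N.p (G.ip (T h) (T h))) * Real.sqrt (N.p (G.ip h h)) := fun h =>
  le_sqrt_mul_sqrt_of_forall_two_mul_le (N.nonneg _)
    fun _ hl => N.two_mul_le_of_ip_mem_pos G (hTpos h) hl

/-- Schwarz-type inequality for positive operators: if `T` is a
positive adjointable linear operator on a VE-space `H` over a topologically
ordered *-space `Z` and `p` is an increasing seminorm on `Z`, then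
`p([Th,h]) ≤ p([Th,Th])^{1/2} p([h,h])^{1/2}`. -/
theorem schwarz_for_positive_operator {Z E : Type*} [AddCommGroup Z] [Module ℂ Z]
    [TopologicalSpace Z] [AddCommGroup E] [Module ℂ E]
    (O : OrderedStarSpace Z) (N : IncSeminorm O) (G : VEGramian O E)
    (T : Module.End ℂ E)
    (hadj : ∃ S : Module.End ℂ E, ∀ h g : E, G.ip (T h) g = G.ip h (S g))
    (hTpos : ∀ h : E, G.ip (T h) h ∈ O.pos) :
    ∀ h : E, N.p (G.ip (T h) h) ≤
      Real.sqrt (N.p (G.ip (T h) (T h))) * Real.sqrt (N.p (G.ip h h)) :=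
  schwarz_for_positive_operator_general O N G T hTpos
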